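/- arXiv:0805.2899 — 4 statements merged into one kernel-verified Lean document; each statement's English description precedes it below -/
import Mathlib

section
/- Let X be a bounded H-valued random variable and F a sigma-algebra. If X is centered (E(X)=0), then ‖‖E(X | F)‖_H‖_∞ ≤ 2 ‖‖X‖_H‖_∞ φ(F, σ(X)), where φ(F, σ(X)) = sup_{A ∈ B(H)} ‖P(X ∈ A | F) - P(X ∈ A)‖_∞. -/
open MeasureTheory


section Aux2

variable {Ω : Type*}

private lemma aux_tail_integrable' [MeasurableSpace Ω] (ν : Measure Ω) [IsFiniteMeasure ν]
    (W : Ω → ℝ) (a b : ℝ) :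
    IntegrableOn (fun t => (ν {ω | t < W ω}).toReal) (Set.Ioc a b) := by
  haveI : IsFiniteMeasure (volume.restrict (Set.Ioc a b)) :=
    ⟨by rw [Measure.restrict_apply_univ]; exact measure_Ioc_lt_top⟩
  have hanti : Antitone fun t => (ν {ω | t < W ω}).toReal := by
    intro s t hst
    exact ENNReal.toReal_mono (measure_ne_top _ _)
      (measure_mono fun ω hω => lt_of_le_of_lt hst hω)
  refine ⟨hanti.measurable.aestronglyMeasurable, ?_⟩
  refine HasFiniteIntegral.of_bounded (C := (ν Set.univ).toReal) ?_
  filter_upwards with t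
  rw [Real.norm_eq_abs, abs_of_nonneg ENNReal.toReal_nonneg]
  exact ENNReal.toReal_mono (measure_ne_top _ _) (measure_mono (Set.subset_univ _))

private lemma aux_layercake' [MeasurableSpace Ω] (ν : Measure Ω) [IsFiniteMeasure ν]
    (Z : Ω → ℝ) (hZ : Measurable Z) (C : ℝ) (hC0 : 0 ≤ C)
    (h0 : 0 ≤ᵐ[ν] Z) (hC : ∀ᵐ ω ∂ν, Z ω ≤ C) :
    ∫ ω, Z ω ∂ν = ∫ t in Set.Ioc 0 C, (ν {ω | t < Z ω}).toReal := by
  have hint : Integrable Z ν := by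
    refine ⟨hZ.aestronglyMeasurable, HasFiniteIntegral.of_bounded (C := C) ?_⟩
    filter_upwards [h0, hC] with ω h1 h2
    rw [Real.norm_eq_abs, abs_of_nonneg h1]; exact h2
  have hzero : ∀ t ∈ Set.Ioi C, (ν {ω | t < Z ω}).toReal = 0 := by
    intro t ht
    have : ν {ω | t < Z ω} = 0 := by
      refine measure_mono_null (fun ω hω => ?_) (ae_iff.mp hC)
      exact not_le.mpr (lt_trans ht hω)
    simp [this]
  rw [hint.integral_eq_integral_meas_lt h0]
  simp only [measureReal_def]
  rw [← Set.Ioc_union_Ioi_eq_Ioi hC0,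
    setIntegral_union (Set.Ioc_disjoint_Ioi le_rfl) measurableSet_Ioi
      (aux_tail_integrable' ν Z 0 C)
      ((integrableOn_congr_fun hzero measurableSet_Ioi).mpr integrableOn_zero)]
  rw [setIntegral_congr_fun measurableSet_Ioi hzero]
  simp

private lemma aux_setIntegral_le (𝓕 : MeasurableSpace Ω) {m0 : MeasurableSpace Ω}
    (h𝓕 : 𝓕 ≤ m0) (μ : Measure Ω) [IsProbabilityMeasure μ]
    (Y : Ω → ℝ) (hY : Measurable Y) (M : ℝ) (hM0 : 0 ≤ M)
    (hbd : ∀ᵐ ω ∂μ, |Y ω| ≤ M)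
    (φ : ℝ)
    (hm : ∀ s : ℝ, ∀ᵐ ω ∂μ,
      (μ[({ω | s < Y ω}).indicator (fun _ => (1:ℝ)) | 𝓕]) ω ≤ (μ {ω | s < Y ω}).toReal + φ)
    (hcent : ∫ ω, Y ω ∂μ = 0)
    (B : Set Ω) (hB : MeasurableSet[𝓕] B) :
    ∫ ω in B, Y ω ∂μ ≤ 2 * M * φ * (μ B).toReal := by
  have hB' : MeasurableSet B := h𝓕 _ hB
  set Z : Ω → ℝ := fun ω => Y ω + M with hZdef
  have hZ : Measurable Z := hY.add_const M
  have hZ0 : 0 ≤ᵐ[μ] Z := by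
    filter_upwards [hbd] with ω h
    have := (abs_le.mp h).1
    simp only [hZdef, Pi.zero_apply]; linarith
  have hZC : ∀ᵐ ω ∂μ, Z ω ≤ 2 * M := by
    filter_upwards [hbd] with ω h
    have := (abs_le.mp h).2
    simp only [hZdef]; linarith
  have hYint : Integrable Y μ := by
    refine ⟨hY.aestronglyMeasurable, HasFiniteIntegral.of_bounded (C := M) ?_⟩
    filter_upwards [hbd] with ω h
    rwa [Real.norm_eq_abs]
  set c : ℝ := (μ B).toReal with hcdef
  have hc0 : 0 ≤ c := ENNReal.toReal_nonneg
  -- pointwise-in-t bound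
  have htail : ∀ t : ℝ, ((μ.restrict B) {ω | t < Z ω}).toReal
      ≤ ((μ {ω | t < Z ω}).toReal + φ) * c := by
    intro t
    have hsets : {ω | t < Z ω} = {ω | t - M < Y ω} := by
      ext ω; simp only [Set.mem_setOf_eq, hZdef]; exact (sub_lt_iff_lt_add).symm
    have hA : MeasurableSet {ω | t - M < Y ω} := measurableSet_lt measurable_const hY
    have hind : Integrable ({ω | t - M < Y ω}.indicator fun _ => (1:ℝ)) μ :=
      (integrable_const 1).indicator hA
    rw [hsets, Measure.restrict_apply hA]
    calc (μ ({ω | t - M < Y ω} ∩ B)).toReal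
        = ∫ ω in B, ({ω | t - M < Y ω}).indicator (fun _ => (1:ℝ)) ω ∂μ := by
          rw [setIntegral_indicator hA, setIntegral_const, Set.inter_comm]
          simp
          rfl
      _ = ∫ ω in B, (μ[({ω | t - M < Y ω}).indicator (fun _ => (1:ℝ))|𝓕]) ω ∂μ :=
          (setIntegral_condExp h𝓕 hind hB).symm
      _ ≤ ∫ _ω in B, ((μ {ω | t - M < Y ω}).toReal + φ) ∂μ := by
          refine setIntegral_mono_ae integrable_condExp.integrableOn
            (integrableOn_const (measure_lt_top μ _).ne) ?_
          exact hm (t - M)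
      _ = ((μ {ω | t - M < Y ω}).toReal + φ) * c := by
          rw [setIntegral_const, smul_eq_mul, mul_comm]
          rfl
  -- layercake computations
  have hZint : Integrable Z μ := hYint.add (integrable_const M)
  have hZint_val : ∫ ω, Z ω ∂μ = M := by
    rw [integral_add hYint (integrable_const M), hcent, integral_const]
    simp
  have L2 : ∫ t in Set.Ioc 0 (2*M), (μ {ω | t < Z ω}).toReal = M := by
    rw [← aux_layercake' μ Z hZ (2*M) (by linarith) hZ0 hZC, hZint_val]
  have L1 : ∫ ω in B, Z ω ∂μ
      = ∫ t in Set.Ioc 0 (2*M), ((μ.restrict B) {ω | t < Z ω}).toReal :=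
    aux_layercake' (μ.restrict B) Z hZ (2*M) (by linarith)
      (ae_restrict_of_ae hZ0) (ae_restrict_of_ae hZC)
  -- compare the t-integrals
  have hmono : ∫ t in Set.Ioc 0 (2*M), ((μ.restrict B) {ω | t < Z ω}).toReal
      ≤ ∫ t in Set.Ioc 0 (2*M), (((μ {ω | t < Z ω}).toReal) * c + φ * c) := by
    refine setIntegral_mono_on (aux_tail_integrable' (μ.restrict B) Z 0 (2*M)) ?_
      measurableSet_Ioc ?_
    · exact ((aux_tail_integrable' μ Z 0 (2*M)).mul_const c).add
        (integrableOn_const measure_Ioc_lt_top.ne)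
    · intro t _
      have h1 := htail t
      have h2 : ((μ {ω | t < Z ω}).toReal + φ) * c
          = (μ {ω | t < Z ω}).toReal * c + φ * c := by ring
      linarith
  have hrhs : ∫ t in Set.Ioc 0 (2*M), (((μ {ω | t < Z ω}).toReal) * c + φ * c)
      = M * c + φ * c * (2*M) := by
    rw [integral_add ((aux_tail_integrable' μ Z 0 (2*M)).mul_const c)
      (integrableOn_const measure_Ioc_lt_top.ne)]
    rw [integral_mul_const, L2, setIntegral_const, smul_eq_mul]
    rw [Real.volume_real_Ioc_of_le (by linarith)]
    ring
  have hZB : ∫ ω in B, Z ω ∂μ = ∫ ω in B, Y ω ∂μ + M * c := by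
    rw [integral_add hYint.integrableOn (integrableOn_const (measure_lt_top μ _).ne)]
    rw [setIntegral_const, smul_eq_mul, mul_comm]
    rfl
  have : ∫ ω in B, Y ω ∂μ + M * c ≤ M * c + φ * c * (2 * M) := by
    rw [← hZB, L1, ← hrhs]; exact hmono
  linarith

end Aux2

private lemma aux_condexp_le (𝓕 : MeasurableSpace Ω) {m0 : MeasurableSpace Ω}
    (h𝓕 : 𝓕 ≤ m0) (μ : Measure Ω) [IsProbabilityMeasure μ]
    (Y : Ω → ℝ) (hY : Measurable Y) (M : ℝ) (hM0 : 0 ≤ M)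
    (hbd : ∀ᵐ ω ∂μ, |Y ω| ≤ M)
    (φ : ℝ)
    (hm : ∀ s : ℝ, ∀ᵐ ω ∂μ,
      (μ[({ω | s < Y ω}).indicator (fun _ => (1:ℝ)) | 𝓕]) ω ≤ (μ {ω | s < Y ω}).toReal + φ)
    (hcent : ∫ ω, Y ω ∂μ = 0) :
    ∀ᵐ ω ∂μ, (μ[Y | 𝓕]) ω ≤ 2 * M * φ := by
  have hYint : Integrable Y μ := by
    refine ⟨hY.aestronglyMeasurable, HasFiniteIntegral.of_bounded (C := M) ?_⟩
    filter_upwards [hbd] with ω h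
    rwa [Real.norm_eq_abs]
  set g : Ω → ℝ := μ[Y | 𝓕] with hg
  have hnull : ∀ n : ℕ, μ {ω | 2*M*φ + 1/((n:ℝ)+1) ≤ g ω} = 0 := by
    intro n
    set ε : ℝ := 1/((n:ℝ)+1) with hε
    have hε0 : 0 < ε := by positivity
    set B := {ω | 2*M*φ + ε ≤ g ω} with hBdef
    have hB : MeasurableSet[𝓕] B :=
      stronglyMeasurable_condExp.measurable measurableSet_Ici
    have h1 : (2*M*φ + ε) * (μ B).toReal ≤ ∫ ω in B, g ω ∂μ :=
      setIntegral_ge_of_const_le_real (h𝓕 _ hB) (measure_ne_top μ B)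
        (fun x hx => hx) integrable_condExp.integrableOn
    have h2 : ∫ ω in B, g ω ∂μ = ∫ ω in B, Y ω ∂μ := setIntegral_condExp h𝓕 hYint hB
    have h3 := aux_setIntegral_le 𝓕 h𝓕 μ Y hY M hM0 hbd φ hm hcent B hB
    have hc : (μ B).toReal = 0 := by nlinarith [ENNReal.toReal_nonneg (a := μ B)]
    exact ((ENNReal.toReal_eq_zero_iff _).mp hc).resolve_right (measure_ne_top μ B)
  have hU : μ {ω | 2*M*φ < g ω} = 0 := by
    refine measure_mono_null (fun ω hω => ?_) (measure_iUnion_null hnull)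
    obtain ⟨n, hn⟩ := exists_nat_one_div_lt (K := ℝ) (sub_pos.mpr hω)
    refine Set.mem_iUnion.mpr ⟨n, ?_⟩
    simp only [Set.mem_setOf_eq]
    have h' : 1/((n:ℝ)+1) < g ω - 2*M*φ := by exact_mod_cast hn
    linarith
  rw [ae_iff]
  convert hU using 2
  ext ω; simp [not_le]

private lemma aux_norm_le {H : Type*} [NormedAddCommGroup H] [InnerProductSpace ℝ H]
    (s : Set H) (hs : Dense s) (v : H) (c : ℝ) (hc : 0 ≤ c)
    (h : ∀ u ∈ s, (inner ℝ u v : ℝ) ≤ c * ‖u‖) : ‖v‖ ≤ c := by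
  obtain ⟨u, hu, hlim⟩ := mem_closure_iff_seq_limit.mp (hs v)
  have h1 : Filter.Tendsto (fun n => (inner ℝ (u n) v : ℝ)) Filter.atTop (nhds (inner ℝ v v)) :=
    Filter.Tendsto.inner hlim tendsto_const_nhds
  have h2 : Filter.Tendsto (fun n => c * ‖u n‖) Filter.atTop (nhds (c * ‖v‖)) :=
    hlim.norm.const_mul c
  have hle : (inner ℝ v v : ℝ) ≤ c * ‖v‖ :=
    le_of_tendsto_of_tendsto' h1 h2 fun n => h (u n) (hu n)
  rw [real_inner_self_eq_norm_mul_norm] at hle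
  rcases eq_or_lt_of_le (norm_nonneg v) with h0 | h0
  · rw [← h0]; exact hc
  · exact le_of_mul_le_mul_right (by linarith) h0

private lemma aux_condexp_inner {H : Type*} [NormedAddCommGroup H] [InnerProductSpace ℝ H]
    [CompleteSpace H]
    (𝓕 : MeasurableSpace Ω) {m0 : MeasurableSpace Ω}
    (h𝓕 : 𝓕 ≤ m0) (μ : Measure Ω) [IsProbabilityMeasure μ]
    (X : Ω → H) (hXint : Integrable X μ) (u : H) :
    (fun ω => (inner ℝ u ((μ[X | 𝓕]) ω) : ℝ)) =ᵐ[μ] μ[fun ω => (inner ℝ u (X ω) : ℝ) | 𝓕] := by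
  refine ae_eq_condExp_of_forall_setIntegral_eq h𝓕 (hXint.const_inner u)
    (fun s hs hμs => (integrable_condExp.const_inner u).integrableOn)
    (fun s hs hμs => ?_) ?_
  · rw [integral_inner integrable_condExp.integrableOn u,
      integral_inner hXint.integrableOn u, setIntegral_condExp h𝓕 hXint hs]
  · exact ((continuous_const.inner continuous_id).comp_stronglyMeasurable
      stronglyMeasurable_condExp).aestronglyMeasurable

private lemma main_aux {Ω : Type*} {H : Type*}
    [NormedAddCommGroup H] [InnerProductSpace ℝ H] [CompleteSpace H]
    [SecondCountableTopology H] [MeasurableSpace H] [BorelSpace H]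
    (𝓕 : MeasurableSpace Ω) {m0 : MeasurableSpace Ω}
    (μ : Measure Ω) [IsProbabilityMeasure μ]
    (X : Ω → H) (hX : Measurable X) (hbdd : eLpNorm X ⊤ μ < ⊤)
    (hcentered : ∫ ω, X ω ∂μ = 0)
    (φ : ℝ) (hφ : 0 ≤ φ)
    (hmix : ∀ A : Set H, MeasurableSet A →
      (eLpNorm (fun ω =>
          (μ[(X ⁻¹' A).indicator (fun _ => (1 : ℝ)) | 𝓕]) ω - (μ (X ⁻¹' A)).toReal)
        ⊤ μ).toReal ≤ φ) :
    (eLpNorm (μ[X | 𝓕]) ⊤ μ).toReal ≤ 2 * (eLpNorm X ⊤ μ).toReal * φ := by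
  by_cases hle : 𝓕 ≤ m0
  case neg =>
    rw [condExp_of_not_le hle]
    have h0 : (0:ℝ) ≤ 2 * (eLpNorm X ⊤ μ).toReal * φ := by positivity
    simpa [eLpNorm_zero] using h0
  case pos =>
  have hX' : Measurable X := hX
  set M := (eLpNorm X ⊤ μ).toReal with hM
  have hM0 : 0 ≤ M := ENNReal.toReal_nonneg
  have hMae : ∀ᵐ ω ∂μ, ‖X ω‖ ≤ M := by
    filter_upwards [ae_le_eLpNormEssSup (f := X) (μ := μ)] with ω hω
    have h2 : (‖X ω‖₊ : ENNReal) ≤ eLpNorm X ⊤ μ := by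
      rw [eLpNorm_exponent_top]; exact hω
    have h3 := ENNReal.toReal_mono hbdd.ne h2
    simpa [hM] using h3
  have hXint : Integrable X μ := MemLp.integrable le_top ⟨hX'.aestronglyMeasurable, hbdd⟩
  have hmix' : ∀ A : Set H, MeasurableSet A → ∀ᵐ ω ∂μ,
      (μ[(X ⁻¹' A).indicator (fun _ => (1 : ℝ)) | 𝓕]) ω ≤ (μ (X ⁻¹' A)).toReal + φ := by
    intro A hA
    set f := fun ω => (μ[(X ⁻¹' A).indicator (fun _ => (1 : ℝ)) | 𝓕]) ω
        - (μ (X ⁻¹' A)).toReal with hf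
    have hind : Integrable ((X ⁻¹' A).indicator fun _ => (1:ℝ)) μ :=
      (integrable_const 1).indicator (hX' hA)
    have h01a : 0 ≤ᵐ[μ] μ[(X ⁻¹' A).indicator (fun _ => (1:ℝ))|𝓕] :=
      condExp_nonneg (Filter.Eventually.of_forall fun ω =>
        Set.indicator_nonneg (fun _ _ => zero_le_one) ω)
    have h01b : μ[(X ⁻¹' A).indicator (fun _ => (1:ℝ))|𝓕] ≤ᵐ[μ] μ[(fun _ => (1:ℝ))|𝓕] :=
      condExp_mono hind (integrable_const 1)
        (Filter.Eventually.of_forall fun ω =>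
          Set.indicator_le' (fun _ _ => le_rfl) (fun _ _ => zero_le_one) ω)
    rw [condExp_const hle] at h01b
    have hμA : (μ (X ⁻¹' A)).toReal ≤ 1 := by
      have h := ENNReal.toReal_mono ENNReal.one_ne_top (prob_le_one (μ := μ) (s := X ⁻¹' A))
      simpa using h
    have hμA0 : 0 ≤ (μ (X ⁻¹' A)).toReal := ENNReal.toReal_nonneg
    have hfb : ∀ᵐ ω ∂μ, ‖f ω‖ ≤ 2 := by
      filter_upwards [h01a, h01b] with ω ha hb
      simp only [Pi.zero_apply] at ha
      rw [Real.norm_eq_abs, abs_le]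
      constructor
      · simp only [hf]; linarith
      · simp only [hf]; linarith
    have hfin : eLpNorm f ⊤ μ ≠ ⊤ := by
      refine (lt_of_le_of_lt (eLpNorm_le_of_ae_bound hfb) ?_).ne
      simp [measure_univ]
    have hae : ∀ᵐ ω ∂μ, |f ω| ≤ φ := by
      have h1 : ∀ᵐ ω ∂μ, (‖f ω‖₊ : ENNReal) ≤ eLpNorm f ⊤ μ := by
        rw [eLpNorm_exponent_top]; exact ae_le_eLpNormEssSup
      filter_upwards [h1] with ω hω
      have h2 := ENNReal.toReal_mono hfin hω
      simp only [ENNReal.coe_toReal, coe_nnnorm, Real.norm_eq_abs] at h2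
      exact h2.trans (hmix A hA)
    filter_upwards [hae] with ω hω
    have h := (abs_le.mp hω).2
    simp only [hf] at h
    linarith
  obtain ⟨s, hsc, hsd⟩ := TopologicalSpace.exists_countable_dense H
  have key : ∀ u : H, ∀ᵐ ω ∂μ, (inner ℝ u ((μ[X | 𝓕]) ω) : ℝ) ≤ 2 * M * φ * ‖u‖ := by
    intro u
    have hY : Measurable fun ω => (inner ℝ u (X ω) : ℝ) := hX'.const_inner
    have hbdY : ∀ᵐ ω ∂μ, |(inner ℝ u (X ω) : ℝ)| ≤ ‖u‖ * M := by
      filter_upwards [hMae] with ω hω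
      exact (abs_real_inner_le_norm u (X ω)).trans
        (mul_le_mul_of_nonneg_left hω (norm_nonneg u))
    have hcentY : ∫ ω, (inner ℝ u (X ω) : ℝ) ∂μ = 0 := by
      rw [integral_inner hXint, hcentered, inner_zero_right]
    have hmY : ∀ t : ℝ, ∀ᵐ ω ∂μ,
        (μ[({ω | t < (inner ℝ u (X ω) : ℝ)}).indicator (fun _ => (1:ℝ)) | 𝓕]) ω
          ≤ (μ {ω | t < (inner ℝ u (X ω) : ℝ)}).toReal + φ := by
      intro t
      have hA : MeasurableSet {h : H | t < (inner ℝ u h : ℝ)} :=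
        measurableSet_lt measurable_const measurable_id.const_inner
      exact hmix' _ hA
    have h1 := aux_condexp_le 𝓕 hle μ _ hY (‖u‖ * M) (by positivity) hbdY φ hmY hcentY
    have h2 := aux_condexp_inner 𝓕 hle μ X hXint u
    filter_upwards [h1, h2] with ω hω1 hω2
    rw [hω2]
    calc (μ[fun ω => (inner ℝ u (X ω) : ℝ) | 𝓕]) ω ≤ 2*(‖u‖*M)*φ := hω1
      _ = 2*M*φ*‖u‖ := by ring
  have hball : ∀ᵐ ω ∂μ, ∀ u ∈ s, (inner ℝ u ((μ[X | 𝓕]) ω) : ℝ) ≤ 2*M*φ*‖u‖ :=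
    (ae_ball_iff hsc).mpr fun u _ => key u
  have hnorm : ∀ᵐ ω ∂μ, ‖(μ[X | 𝓕]) ω‖ ≤ 2*M*φ := by
    filter_upwards [hball] with ω hω
    exact aux_norm_le s hsd _ (2*M*φ) (by positivity) fun u hu => hω u hu
  have hfinal : eLpNorm (μ[X | 𝓕]) ⊤ μ ≤ ENNReal.ofReal (2*M*φ) := by
    have h := eLpNorm_le_of_ae_bound (p := ⊤) hnorm
    simpa [measure_univ] using h
  calc (eLpNorm (μ[X | 𝓕]) ⊤ μ).toReal ≤ 2*M*φ :=
      ENNReal.toReal_le_of_le_ofReal (by positivity) hfinal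
    _ = 2 * (eLpNorm X ⊤ μ).toReal * φ := by rw [hM]



/-- If `X` is a bounded centered `H`-valued random variable and `φ` bounds the
`φ`-mixing coefficient `φ(𝓕, σ(X)) = sup_A ‖P(X ∈ A | 𝓕) - P(X ∈ A)‖_∞`, then
`‖‖E(X | 𝓕)‖_H‖_∞ ≤ 2 ‖‖X‖_H‖_∞ φ`. -/
theorem stmt_2 {Ω : Type*} (𝓕 : MeasurableSpace Ω) [MeasurableSpace Ω] {H : Type*}
    [NormedAddCommGroup H] [InnerProductSpace ℝ H] [CompleteSpace H]
    [SecondCountableTopology H] [MeasurableSpace H] [BorelSpace H]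
    (μ : Measure Ω) [IsProbabilityMeasure μ]
    (h𝓕 : 𝓕 ≤ ‹MeasurableSpace Ω›)
    (X : Ω → H) (hX : Measurable X) (hbdd : eLpNorm X ⊤ μ < ⊤)
    (hcentered : ∫ ω, X ω ∂μ = 0)
    (φ : ℝ) (hφ : 0 ≤ φ)
    (hmix : ∀ A : Set H, MeasurableSet A →
      (eLpNorm (fun ω =>
          (μ[(X ⁻¹' A).indicator (fun _ => (1 : ℝ)) | 𝓕]) ω - (μ (X ⁻¹' A)).toReal)
        ⊤ μ).toReal ≤ φ) :
    (eLpNorm (μ[X | 𝓕]) ⊤ μ).toReal ≤ 2 * (eLpNorm X ⊤ μ).toReal * φ :=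
  main_aux 𝓕 μ X hX hbdd hcentered φ hφ hmix
end

section
/- Let (U_k)_{k≥0} be nonnegative reals with U_0 = 0 and U_{i+j} ≤ C₁ U_i + C₂ U_j for all i,j. If Σ_{k=1}^∞ k^{-p} U_k < ∞ for some p > 1, then m^{-(p-1)} Σ_{j≥1} j^{-p} U_{jm} → 0 as m → ∞; in particular U_m / m^{p-1} → 0 as m → ∞. -/
/-!
Averaging `U N ≤ C₁ U (k + 1) + C₂ U (N - 1 - k)` over the `m` indices `N - m ≤ k < N` bounds
`m U N` by `C₁` times the sum of `U` over the block `(N - m, N]` plus `C₂` times the sum of the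
first `m` values. With `N = m` this gives `U m / m ^ (p - 1) ≤ (C₁ + C₂) ∑_{k ≤ m} U k / m ^ p`,
and that quotient tends to `0` by a Kronecker-type argument. With `N = (j + 1) m`, `j ≥ 1`, use
`U k ≤ N ^ p · U k / k ^ p` on the block: these blocks tile a tail of the convergent series
`∑ U k / k ^ p`, which tends to `0`, and the remaining terms carry the summable weights `j ^ (-p)`.
-/

open Filter Finset Topology

lemma le_rpow_mul_div_rpow {x a b p : ℝ} (hx : 0 ≤ x) (ha : 0 < a) (hab : a ≤ b) (hp : 0 ≤ p) :
    x ≤ b ^ p * (x / a ^ p) := by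
  have hap : 0 < a ^ p := Real.rpow_pos_of_pos ha p
  calc x = a ^ p * (x / a ^ p) := by field_simp
    _ ≤ b ^ p * (x / a ^ p) := by gcongr

lemma sum_Ico_le_rpow_mul_sum_div {f : ℕ → ℝ} (hf : ∀ k, 0 ≤ f k) {p : ℝ} (hp : 0 ≤ p)
    (a b : ℕ) :
    ∑ k ∈ Ico a b, f k ≤ (b : ℝ) ^ p * ∑ k ∈ Ico a b, f k / ((k : ℝ) + 1) ^ p := by
  rw [mul_sum]
  refine sum_le_sum fun k hk => le_rpow_mul_div_rpow (hf k) (by positivity) ?_ hp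
  exact_mod_cast (mem_Ico.1 hk).2

lemma Summable.tendsto_tsum_sub_sum_range {g : ℕ → ℝ} (hg : Summable g) :
    Tendsto (fun K => ∑' k, g k - ∑ k ∈ range K, g k) atTop (𝓝 0) := by
  simpa using (tendsto_const_nhds (x := ∑' k, g k)).sub hg.tendsto_sum_tsum_nat

lemma sum_Ico_le_tsum_sub_sum_range {g : ℕ → ℝ} (hg0 : ∀ k, 0 ≤ g k) (hg : Summable g)
    {K M : ℕ} (hKM : K ≤ M) :
    ∑ k ∈ Ico K M, g k ≤ ∑' k, g k - ∑ k ∈ range K, g k := by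
  rw [sum_Ico_eq_sub _ hKM]
  linarith [hg.sum_le_tsum (range M) fun k _ => hg0 k]

theorem tendsto_sum_range_div_rpow_of_summable {f : ℕ → ℝ} (hf : ∀ k, 0 ≤ f k) {p : ℝ}
    (hp : 0 < p) (hsum : Summable fun k : ℕ => f k / ((k : ℝ) + 1) ^ p) :
    Tendsto (fun M : ℕ => (∑ k ∈ range M, f k) / (M : ℝ) ^ p) atTop (𝓝 0) := by
  set tail := fun K : ℕ =>
    ∑' k : ℕ, f k / ((k : ℝ) + 1) ^ p - ∑ k ∈ range K, f k / ((k : ℝ) + 1) ^ p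
  have hsplit : ∀ K M : ℕ, K ≤ M → 0 < M →
      (∑ k ∈ range M, f k) / (M : ℝ) ^ p ≤ (∑ k ∈ range K, f k) / (M : ℝ) ^ p + tail K := by
    intro K M hKM hM
    have hMp : 0 < (M : ℝ) ^ p := by positivity
    have hIco : ∑ k ∈ Ico K M, f k ≤ (M : ℝ) ^ p * tail K :=
      (sum_Ico_le_rpow_mul_sum_div hf hp.le K M).trans <| mul_le_mul_of_nonneg_left
        (sum_Ico_le_tsum_sub_sum_range (fun k => div_nonneg (hf k) (by positivity)) hsum hKM) hMp.le
    rw [← sum_range_add_sum_Ico f hKM, add_div]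
    gcongr
    rwa [div_le_iff₀ hMp, mul_comm]
  have htail : Tendsto tail atTop (𝓝 0) := hsum.tendsto_tsum_sub_sum_range
  refine tendsto_order.2 ⟨fun a ha => Eventually.of_forall fun M =>
    ha.trans_le (div_nonneg (sum_nonneg fun k _ => hf k) (by positivity)), fun ε hε => ?_⟩
  obtain ⟨K, hK⟩ := ((tendsto_order.1 htail).2 (ε / 2) (by linarith)).exists
  have hhead : Tendsto (fun M : ℕ => (∑ k ∈ range K, f k) / (M : ℝ) ^ p) atTop (𝓝 0) :=
    tendsto_const_nhds.div_atTop ((tendsto_rpow_atTop hp).comp tendsto_natCast_atTop_atTop)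
  filter_upwards [(tendsto_order.1 hhead).2 (ε / 2) (by linarith), eventually_ge_atTop (K + 1)]
    with M hM hKM
  linarith [hsplit K M (by omega) (by omega)]

lemma sum_range_sum_Ico_succ_mul {M : Type*} [AddCommMonoid M] (f : ℕ → M) (m J : ℕ) :
    ∑ j ∈ range J, ∑ k ∈ Ico ((j + 1) * m) ((j + 1 + 1) * m), f k =
      ∑ k ∈ Ico m ((J + 1) * m), f k := by
  induction J with
  | zero => simp
  | succ J ih =>
    rw [sum_range_succ, ih, sum_Ico_consecutive _ (by nlinarith) (by nlinarith)]

section Subadditive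

variable {U : ℕ → ℝ} {C₁ C₂ : ℝ}

lemma natCast_mul_le_of_le_mul_add_mul (hU : ∀ n, 0 ≤ U n) (hU0 : U 0 = 0) (hC₂ : 0 ≤ C₂)
    (hsub : ∀ i j, U (i + j) ≤ C₁ * U i + C₂ * U j) {m N : ℕ} (hmN : m ≤ N) :
    m * U N ≤ C₁ * ∑ k ∈ Ico (N - m) N, U (k + 1) + C₂ * ∑ k ∈ range m, U (k + 1) := by
  have hhead : ∑ r ∈ range m, U r ≤ ∑ k ∈ range m, U (k + 1) := by
    have := sum_range_succ' U m
    rw [hU0, add_zero] at this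
    rw [← this, sum_range_succ]
    linarith [hU m]
  have hreflect : ∑ k ∈ Ico (N - m) N, U (N - 1 - k) = ∑ r ∈ range m, U r := by
    rw [sum_Ico_eq_sum_range, Nat.sub_sub_self hmN, ← sum_range_reflect U m]
    exact sum_congr rfl fun i hi => by rw [mem_range] at hi; congr 1; omega
  calc (m : ℝ) * U N = ∑ _k ∈ Ico (N - m) N, U N := by simp [Nat.sub_sub_self hmN]
    _ ≤ ∑ k ∈ Ico (N - m) N, (C₁ * U (k + 1) + C₂ * U (N - 1 - k)) := by
      refine sum_le_sum fun k hk => ?_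
      have hkN := (mem_Ico.1 hk).2
      simpa [show k + 1 + (N - 1 - k) = N by omega] using hsub (k + 1) (N - 1 - k)
    _ = C₁ * ∑ k ∈ Ico (N - m) N, U (k + 1) + C₂ * ∑ r ∈ range m, U r := by
      rw [sum_add_distrib, ← mul_sum, ← mul_sum, hreflect]
    _ ≤ _ := by gcongr

lemma div_rpow_sub_one_le_of_le_mul_add_mul (hU : ∀ n, 0 ≤ U n) (hU0 : U 0 = 0)
    (hC₂ : 0 ≤ C₂) (hsub : ∀ i j, U (i + j) ≤ C₁ * U i + C₂ * U j) (p : ℝ) {m : ℕ} (hm : 0 < m) :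
    U m / (m : ℝ) ^ (p - 1) ≤ (C₁ + C₂) * ((∑ k ∈ range m, U (k + 1)) / (m : ℝ) ^ p) := by
  have hm' : (0 : ℝ) < m := by exact_mod_cast hm
  have hmp : (0 : ℝ) < (m : ℝ) ^ p := by positivity
  have hkey := natCast_mul_le_of_le_mul_add_mul hU hU0 hC₂ hsub (le_refl m)
  rw [Nat.sub_self, ← range_eq_Ico] at hkey
  rw [Real.rpow_sub_one hm'.ne', div_div_eq_mul_div, div_le_iff₀ hmp, mul_div_assoc',
    div_mul_cancel₀ _ hmp.ne']
  linarith

lemma div_rpow_le_of_le_mul_add_mul (hU : ∀ n, 0 ≤ U n) (hU0 : U 0 = 0) (hC₁ : 0 ≤ C₁)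
    (hC₂ : 0 ≤ C₂) (hsub : ∀ i j, U (i + j) ≤ C₁ * U i + C₂ * U j) {p : ℝ} (hp : 0 ≤ p)
    {m : ℕ} (hm : 0 < m) (j : ℕ) :
    U ((j + 1) * m) / ((j : ℝ) + 1) ^ p ≤ (m : ℝ) ^ (p - 1) *
      (C₁ * ∑ k ∈ Ico (j * m) ((j + 1) * m), U (k + 1) / ((k : ℝ) + 1) ^ p +
        C₂ * ((∑ k ∈ range m, U (k + 1)) / (m : ℝ) ^ p) * (((j : ℝ) + 1) ^ p)⁻¹) := by
  set N := (j + 1) * m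
  have hm' : (0 : ℝ) < m := by exact_mod_cast hm
  have hmp : (0 : ℝ) < (m : ℝ) ^ p := by positivity
  have hjp : (0 : ℝ) < ((j : ℝ) + 1) ^ p := by positivity
  have hNp : (N : ℝ) ^ p = ((j : ℝ) + 1) ^ p * (m : ℝ) ^ p := by
    rw [← Real.mul_rpow (by positivity) hm'.le]; push_cast [N]; rfl
  have hkey := natCast_mul_le_of_le_mul_add_mul hU hU0 hC₂ hsub (m := m) (N := N)
    (Nat.le_mul_of_pos_left m j.succ_pos)
  rw [show N - m = j * m by simp only [N]; rw [add_mul, one_mul, Nat.add_sub_cancel]] at hkey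
  have hblock := sum_Ico_le_rpow_mul_sum_div (fun k => hU (k + 1)) hp (j * m) N
  rw [hNp] at hblock
  rw [Real.rpow_sub_one hm'.ne', div_le_iff₀ hjp]
  field_simp
  linarith [mul_le_mul_of_nonneg_left hblock hC₁]

lemma sum_range_div_rpow_le_of_le_mul_add_mul (hU : ∀ n, 0 ≤ U n) (hU0 : U 0 = 0)
    (hC₁ : 0 ≤ C₁) (hC₂ : 0 ≤ C₂) (hsub : ∀ i j, U (i + j) ≤ C₁ * U i + C₂ * U j) {p : ℝ}
    (hp : 1 < p) (hsum : Summable fun k : ℕ => U (k + 1) / ((k : ℝ) + 1) ^ p)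
    {m : ℕ} (hm : 0 < m) (J : ℕ) :
    ∑ j ∈ range J, U ((j + 1 + 1) * m) / (((j + 1 : ℕ) : ℝ) + 1) ^ p ≤ (m : ℝ) ^ (p - 1) *
      (C₁ * (∑' k : ℕ, U (k + 1) / ((k : ℝ) + 1) ^ p -
          ∑ k ∈ range m, U (k + 1) / ((k : ℝ) + 1) ^ p) +
        C₂ * ((∑ k ∈ range m, U (k + 1)) / (m : ℝ) ^ p) * ∑' j : ℕ, (((j : ℝ) + 1) ^ p)⁻¹) := by
  set g := fun k : ℕ => U (k + 1) / ((k : ℝ) + 1) ^ p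
  set w := fun j : ℕ => (((j : ℝ) + 1) ^ p)⁻¹
  set s := (∑ k ∈ range m, U (k + 1)) / (m : ℝ) ^ p
  have hs : 0 ≤ s := div_nonneg (sum_nonneg fun k _ => hU (k + 1)) (by positivity)
  have hw : Summable w := by
    simpa [w] using (summable_nat_add_iff 1).2 (Real.summable_nat_rpow_inv.2 hp)
  have hblocks : ∑ j ∈ range J, ∑ k ∈ Ico ((j + 1) * m) ((j + 1 + 1) * m), g k ≤
      ∑' k, g k - ∑ k ∈ range m, g k := by
    rw [sum_range_sum_Ico_succ_mul]
    exact sum_Ico_le_tsum_sub_sum_range (fun k => div_nonneg (hU _) (by positivity)) hsum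
      (Nat.le_mul_of_pos_left m J.succ_pos)
  have hweights : ∑ j ∈ range J, w (j + 1) ≤ ∑' j, w j :=
    calc ∑ j ∈ range J, w (j + 1) ≤ ∑ j ∈ range (J + 1), w j := by
          rw [sum_range_succ']; linarith [show 0 ≤ w 0 by positivity]
      _ ≤ ∑' j, w j := hw.sum_le_tsum _ fun j _ => by positivity
  calc _ ≤ ∑ j ∈ range J, (m : ℝ) ^ (p - 1) *
        (C₁ * ∑ k ∈ Ico ((j + 1) * m) ((j + 1 + 1) * m), g k + C₂ * s * w (j + 1)) :=
        sum_le_sum fun j _ =>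
          div_rpow_le_of_le_mul_add_mul hU hU0 hC₁ hC₂ hsub (by linarith) hm (j + 1)
    _ = (m : ℝ) ^ (p - 1) * (C₁ * ∑ j ∈ range J, ∑ k ∈ Ico ((j + 1) * m) ((j + 1 + 1) * m), g k
        + C₂ * s * ∑ j ∈ range J, w (j + 1)) := by
        rw [← mul_sum, sum_add_distrib, ← mul_sum, ← mul_sum]
    _ ≤ _ := by gcongr

lemma one_div_rpow_mul_tsum_le_of_le_mul_add_mul (hU : ∀ n, 0 ≤ U n) (hU0 : U 0 = 0)
    (hC₁ : 0 ≤ C₁) (hC₂ : 0 ≤ C₂) (hsub : ∀ i j, U (i + j) ≤ C₁ * U i + C₂ * U j) {p : ℝ}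
    (hp : 1 < p) (hsum : Summable fun k : ℕ => U (k + 1) / ((k : ℝ) + 1) ^ p)
    {m : ℕ} (hm : 0 < m) :
    1 / (m : ℝ) ^ (p - 1) * ∑' j : ℕ, U ((j + 1) * m) / ((j : ℝ) + 1) ^ p ≤
      U m / (m : ℝ) ^ (p - 1) +
        C₁ * (∑' k : ℕ, U (k + 1) / ((k : ℝ) + 1) ^ p -
          ∑ k ∈ range m, U (k + 1) / ((k : ℝ) + 1) ^ p) +
        C₂ * ((∑ k ∈ range m, U (k + 1)) / (m : ℝ) ^ p) * ∑' j : ℕ, (((j : ℝ) + 1) ^ p)⁻¹ := by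
  set R := C₁ * (∑' k : ℕ, U (k + 1) / ((k : ℝ) + 1) ^ p -
      ∑ k ∈ range m, U (k + 1) / ((k : ℝ) + 1) ^ p) +
    C₂ * ((∑ k ∈ range m, U (k + 1)) / (m : ℝ) ^ p) * ∑' j : ℕ, (((j : ℝ) + 1) ^ p)⁻¹
  have hmp : (0 : ℝ) < (m : ℝ) ^ (p - 1) := by positivity
  have hterm : ∀ j : ℕ, 0 ≤ U ((j + 1) * m) / ((j : ℝ) + 1) ^ p :=
    fun j => div_nonneg (hU _) (by positivity)
  have hpartial : ∀ J, ∑ j ∈ range J, U ((j + 1) * m) / ((j : ℝ) + 1) ^ p ≤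
      U m + (m : ℝ) ^ (p - 1) * R := fun J =>
    calc _ ≤ ∑ j ∈ range (J + 1), U ((j + 1) * m) / ((j : ℝ) + 1) ^ p :=
          sum_le_sum_of_subset_of_nonneg (range_subset_range.2 J.le_succ) fun j _ _ => hterm j
      _ ≤ _ := by
          rw [sum_range_succ']
          simpa [add_comm] using
            sum_range_div_rpow_le_of_le_mul_add_mul hU hU0 hC₁ hC₂ hsub hp hsum hm J
  calc _ ≤ 1 / (m : ℝ) ^ (p - 1) * (U m + (m : ℝ) ^ (p - 1) * R) := by
        gcongr
        exact Real.tsum_le_of_sum_range_le hterm hpartial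
    _ = U m / (m : ℝ) ^ (p - 1) + R := by field_simp
    _ = _ := by ring

end Subadditive

/-- Lemma (Appendix, part 2): if `(U_k)` are nonnegative reals with `U 0 = 0`,
`U (i+j) ≤ C₁ U i + C₂ U j`, and `Σ_{k≥1} k^{-p} U k < ∞` for some `p > 1`, then
`m^{-(p-1)} Σ_{j≥1} j^{-p} U (j m) → 0` as `m → ∞`; in particular `U m / m^{p-1} → 0`. -/
theorem stmt_5 (U : ℕ → ℝ) (hUnonneg : ∀ n, 0 ≤ U n) (hU0 : U 0 = 0)
    (C₁ C₂ : ℝ) (hC₁ : 0 < C₁) (hC₂ : 0 < C₂)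
    (hsub : ∀ i j : ℕ, U (i + j) ≤ C₁ * U i + C₂ * U j)
    (p : ℝ) (hp : 1 < p)
    (hsum : Summable (fun k : ℕ => U (k + 1) / ((k : ℝ) + 1) ^ p)) :
    Tendsto (fun m : ℕ =>
        (1 / (m : ℝ) ^ (p - 1)) * ∑' j : ℕ, U ((j + 1) * m) / ((j : ℝ) + 1) ^ p)
      atTop (nhds 0) ∧
    Tendsto (fun m : ℕ => U m / (m : ℝ) ^ (p - 1)) atTop (nhds 0) := by
  have hS : Tendsto (fun m : ℕ => (∑ k ∈ range m, U (k + 1)) / (m : ℝ) ^ p) atTop (𝓝 0) :=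
    tendsto_sum_range_div_rpow_of_summable (fun k => hUnonneg (k + 1)) (by linarith) hsum
  have hdiag : Tendsto (fun m : ℕ => U m / (m : ℝ) ^ (p - 1)) atTop (𝓝 0) := by
    refine tendsto_of_tendsto_of_tendsto_of_le_of_le' tendsto_const_nhds
      (by simpa using hS.const_mul (C₁ + C₂)) (Eventually.of_forall fun m => ?_) ?_
    · exact div_nonneg (hUnonneg m) (by positivity)
    · filter_upwards [eventually_gt_atTop 0] with m hm
      exact div_rpow_sub_one_le_of_le_mul_add_mul hUnonneg hU0 hC₂.le hsub p hm
  refine ⟨?_, hdiag⟩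
  have hbound := (hdiag.add (hsum.tendsto_tsum_sub_sum_range.const_mul C₁)).add
    ((hS.const_mul C₂).mul_const (∑' j : ℕ, (((j : ℝ) + 1) ^ p)⁻¹))
  simp only [mul_zero, zero_mul, add_zero] at hbound
  refine tendsto_of_tendsto_of_tendsto_of_le_of_le' tendsto_const_nhds hbound
    (Eventually.of_forall fun m => ?_) ?_
  · exact mul_nonneg (by positivity) (tsum_nonneg fun j => div_nonneg (hUnonneg _) (by positivity))
  · filter_upwards [eventually_gt_atTop 0] with m hm
    exact one_div_rpow_mul_tsum_le_of_le_mul_add_mul hUnonneg hU0 hC₁.le hC₂.le hsub hp hsum hm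
end

section
/- Let (X_i) be a stationary H-valued sequence with partial sums S_n. Then Σ_{n≥1} n^{-3/2} ‖‖E(S_n | F_0)‖_H‖_∞ ≤ 3 Σ_{n≥1} n^{-1/2} ‖‖E(X_n | F_0)‖_H‖_∞. -/
open MeasureTheory

open scoped ENNReal

open Finset in
private lemma stmt6_perterm (m : ℝ) (hm : 1 ≤ m) :
    ((m+1) * Real.sqrt (m+1))⁻¹ ≤ 2 * ((Real.sqrt m)⁻¹ - (Real.sqrt (m+1))⁻¹) := by
  have hm0 : (0:ℝ) < m := by linarith
  have ha : 0 < Real.sqrt m := Real.sqrt_pos.2 hm0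
  have hb : 0 < Real.sqrt (m+1) := Real.sqrt_pos.2 (by linarith)
  set a := Real.sqrt m with ha'
  set b := Real.sqrt (m+1) with hb'
  have ha2 : a^2 = m := Real.sq_sqrt hm0.le
  have hb2 : b^2 = m+1 := Real.sq_sqrt (by linarith)
  have hab : a ≤ b := Real.sqrt_le_sqrt (by linarith)
  have hba : (b - a) * (a + b) = 1 := by nlinarith
  have goal' : a * (1 + 2*b^2) ≤ 2 * b^3 := by nlinarith [mul_le_mul_of_nonneg_left hab ha.le]
  have expand : 2 * (a⁻¹ - b⁻¹) - ((m+1)*b)⁻¹ = (2*b^3 - a*(1+2*b^2)) / (a*b^3) := by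
    rw [← hb2]; field_simp; ring
  linarith [div_nonneg (by linarith : (0:ℝ) ≤ 2*b^3 - a*(1+2*b^2))
    (by positivity : (0:ℝ) ≤ a*b^3), expand]

open Finset in
private lemma stmt6_tail_aux (j : ℕ) : ∀ N, j ≤ N →
    ∑ n ∈ Icc j N, (((n:ℝ)+1) * Real.sqrt ((n:ℝ)+1))⁻¹
      ≤ (((j:ℝ)+1) * Real.sqrt ((j:ℝ)+1))⁻¹
        + 2 * ((Real.sqrt ((j:ℝ)+1))⁻¹ - (Real.sqrt ((N:ℝ)+1))⁻¹) := by
  refine Nat.le_induction ?_ ?_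
  · simp
  · intro N hjN ih
    rw [Finset.sum_Icc_succ_top (by omega : j ≤ N + 1)]
    have hpt := stmt6_perterm ((N:ℝ)+1) (le_add_of_nonneg_left (Nat.cast_nonneg N))
    push_cast
    push_cast at ih hpt
    linarith

open Finset in
private lemma stmt6_tail (j N : ℕ) :
    ∑ n ∈ Icc j N, (((n:ℝ)+1) * Real.sqrt ((n:ℝ)+1))⁻¹
      ≤ 3 * (Real.sqrt ((j:ℝ)+1))⁻¹ := by
  have hs : (0:ℝ) < Real.sqrt ((j:ℝ)+1) := Real.sqrt_pos.2 (by positivity)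
  rcases le_or_gt j N with h | h
  · have := stmt6_tail_aux j N h
    have h1 : (((j:ℝ)+1) * Real.sqrt ((j:ℝ)+1))⁻¹ ≤ (Real.sqrt ((j:ℝ)+1))⁻¹ := by
      apply inv_anti₀ hs
      nlinarith
    have h2 : (0:ℝ) ≤ (Real.sqrt ((N:ℝ)+1))⁻¹ := by positivity
    linarith
  · rw [Finset.Icc_eq_empty (by omega)]
    simp

private lemma stmt6_conv32 (n : ℕ) :
    (((n:ℝ≥0∞)+1) ^ ((3:ℝ)/2))⁻¹
      = ENNReal.ofReal ((((n:ℝ)+1) * Real.sqrt ((n:ℝ)+1))⁻¹) := by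
  have h0 : ((n:ℝ≥0∞)+1) = ENNReal.ofReal ((n:ℝ)+1) := by
    rw [ENNReal.ofReal_add (Nat.cast_nonneg n) zero_le_one]
    simp
  have hx : (0:ℝ) < (n:ℝ)+1 := by positivity
  rw [h0, ENNReal.ofReal_rpow_of_pos hx, ← ENNReal.ofReal_inv_of_pos (by positivity)]
  congr 2
  rw [show (3:ℝ)/2 = 1 + 1/2 by norm_num, Real.rpow_add hx, Real.rpow_one,
    ← Real.sqrt_eq_rpow]

private lemma stmt6_conv12 (n : ℕ) :
    (((n:ℝ≥0∞)+1) ^ ((1:ℝ)/2))⁻¹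
      = ENNReal.ofReal ((Real.sqrt ((n:ℝ)+1))⁻¹) := by
  have h0 : ((n:ℝ≥0∞)+1) = ENNReal.ofReal ((n:ℝ)+1) := by
    rw [ENNReal.ofReal_add (Nat.cast_nonneg n) zero_le_one]
    simp
  have hx : (0:ℝ) < (n:ℝ)+1 := by positivity
  rw [h0, ENNReal.ofReal_rpow_of_pos hx, ← ENNReal.ofReal_inv_of_pos (by positivity),
    ← Real.sqrt_eq_rpow]

open Finset in
private lemma stmt6_tail_ennreal (j : ℕ) :
    ∑' n : ℕ, (if j ≤ n then (((n:ℝ≥0∞)+1) ^ ((3:ℝ)/2))⁻¹ else 0)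
      ≤ 3 * (((j:ℝ≥0∞)+1) ^ ((1:ℝ)/2))⁻¹ := by
  refine tsum_le_of_sum_le' zero_le (fun s => ?_)
  calc ∑ n ∈ s, (if j ≤ n then (((n:ℝ≥0∞)+1) ^ ((3:ℝ)/2))⁻¹ else 0)
      ≤ ∑ n ∈ Icc j (s.sup id), (((n:ℝ≥0∞)+1) ^ ((3:ℝ)/2))⁻¹ := by
        rw [Finset.sum_ite, Finset.sum_const_zero, add_zero]
        refine Finset.sum_le_sum_of_subset (fun n hn => ?_)
        simp only [Finset.mem_filter] at hn
        exact Finset.mem_Icc.2 ⟨hn.2, Finset.le_sup (f := id) hn.1⟩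
    _ = ENNReal.ofReal (∑ n ∈ Icc j (s.sup id), (((n:ℝ)+1) * Real.sqrt ((n:ℝ)+1))⁻¹) := by
        rw [ENNReal.ofReal_sum_of_nonneg (fun n _ => by positivity)]
        exact Finset.sum_congr rfl (fun n _ => stmt6_conv32 n)
    _ ≤ ENNReal.ofReal (3 * (Real.sqrt ((j:ℝ)+1))⁻¹) :=
        ENNReal.ofReal_le_ofReal (stmt6_tail j _)
    _ = 3 * (((j:ℝ≥0∞)+1) ^ ((1:ℝ)/2))⁻¹ := by
        rw [ENNReal.ofReal_mul (by norm_num), stmt6_conv12]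
        norm_num

private lemma stmt6_key (a : ℕ → ℝ≥0∞) :
    ∑' n : ℕ, (∑ j ∈ Finset.range (n+1), a j) / ((n:ℝ≥0∞)+1) ^ ((3:ℝ)/2)
      ≤ 3 * ∑' j : ℕ, a j / ((j:ℝ≥0∞)+1) ^ ((1:ℝ)/2) := by
  have step1 : ∀ n : ℕ,
      (∑ j ∈ Finset.range (n+1), a j) / ((n:ℝ≥0∞)+1) ^ ((3:ℝ)/2)
        = ∑' j : ℕ, (if j ≤ n then a j * (((n:ℝ≥0∞)+1) ^ ((3:ℝ)/2))⁻¹ else 0) := by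
    intro n
    rw [div_eq_mul_inv, Finset.sum_mul, sum_eq_tsum_indicator]
    congr 1
    ext j
    simp [Set.indicator_apply, Nat.lt_succ_iff]
  calc ∑' n : ℕ, (∑ j ∈ Finset.range (n+1), a j) / ((n:ℝ≥0∞)+1) ^ ((3:ℝ)/2)
      = ∑' n : ℕ, ∑' j : ℕ, (if j ≤ n then a j * (((n:ℝ≥0∞)+1) ^ ((3:ℝ)/2))⁻¹ else 0) :=
        tsum_congr step1
    _ = ∑' j : ℕ, ∑' n : ℕ, (if j ≤ n then a j * (((n:ℝ≥0∞)+1) ^ ((3:ℝ)/2))⁻¹ else 0) :=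
        ENNReal.tsum_comm
    _ = ∑' j : ℕ, a j * ∑' n : ℕ, (if j ≤ n then (((n:ℝ≥0∞)+1) ^ ((3:ℝ)/2))⁻¹ else 0) := by
        refine tsum_congr (fun j => ?_)
        rw [← ENNReal.tsum_mul_left]
        exact tsum_congr (fun n => by rw [mul_ite, mul_zero])
    _ ≤ ∑' j : ℕ, a j * (3 * (((j:ℝ≥0∞)+1) ^ ((1:ℝ)/2))⁻¹) :=
        ENNReal.tsum_le_tsum (fun j => mul_le_mul_right (stmt6_tail_ennreal j) _)
    _ = 3 * ∑' j : ℕ, a j / ((j:ℝ≥0∞)+1) ^ ((1:ℝ)/2) := by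
        rw [← ENNReal.tsum_mul_left]
        exact tsum_congr (fun j => by simp [div_eq_mul_inv, mul_comm, mul_assoc, mul_left_comm])

/-- For a stationary adapted centered `H`-valued sequence `X_i = X₀ ∘ T^i`,
`Σ_{n≥1} n^{-3/2} ‖‖E(S_n | F₀)‖_H‖_∞ ≤ 3 Σ_{n≥1} n^{-1/2} ‖‖E(X_n | F₀)‖_H‖_∞`. -/
theorem stmt_6 {Ω : Type*} (F₀ : MeasurableSpace Ω) [MeasurableSpace Ω] {H : Type*}
    [NormedAddCommGroup H] [InnerProductSpace ℝ H] [CompleteSpace H]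
    [SecondCountableTopology H] [MeasurableSpace H] [BorelSpace H]
    (μ : Measure Ω) [IsProbabilityMeasure μ]
    (T : Equiv.Perm Ω) (hT : MeasurePreserving T μ μ) (hTsymm : Measurable T.symm)
    (𝓕 : ℤ → MeasurableSpace Ω)
    (h𝓕 : ∀ i : ℤ, 𝓕 i = MeasurableSpace.comap (fun ω => (T ^ i) ω) F₀)
    (h𝓕mono : Monotone 𝓕) (h𝓕le : ∀ i, 𝓕 i ≤ ‹MeasurableSpace Ω›)
    (X₀ : Ω → H) (hX₀ : Measurable X₀) (hbdd : eLpNorm X₀ ⊤ μ < ⊤)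
    (hcentered : ∫ ω, X₀ ω ∂μ = 0)
    (X : ℤ → Ω → H) (hX : ∀ i : ℤ, X i = fun ω => X₀ ((T ^ i) ω))
    (hadapt : ∀ i : ℤ, StronglyMeasurable[𝓕 i] (X i))
    (S : ℕ → Ω → H) (hS : ∀ n : ℕ, S n = fun ω => ∑ k ∈ Finset.Icc 1 n, X (k : ℤ) ω) :
    ∑' n : ℕ, eLpNorm (μ[S (n + 1) | 𝓕 0]) ⊤ μ / ((n : ℝ≥0∞) + 1) ^ ((3 : ℝ) / 2)
      ≤ 3 * ∑' n : ℕ,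
          eLpNorm (μ[X ((n : ℤ) + 1) | 𝓕 0]) ⊤ μ / ((n : ℝ≥0∞) + 1) ^ ((1 : ℝ) / 2) := by
  rename_i mΩ _ _ _ _ _ _ _
  letI : MeasurableSpace Ω := mΩ
  by_cases hle : 𝓕 0 ≤ mΩ
  swap
  · -- degenerate case: all conditional expectations are zero
    simp only [condExp_of_not_le hle, eLpNorm_zero, ENNReal.zero_div, tsum_zero]
    exact zero_le
  -- `𝓕 0 = F₀`
  have hF0 : 𝓕 0 = F₀ := by
    rw [h𝓕 0]
    simp only [zpow_zero]
    exact MeasurableSpace.comap_id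
  -- measure preservation of natural powers of `T`
  have hTpow : ∀ k : ℕ, MeasurePreserving (⇑(T ^ k)) μ μ := by
    intro k
    induction k with
    | zero => simpa using MeasurePreserving.id μ
    | succ k ih =>
        rw [pow_succ]
        have hco : ⇑(T ^ k * T) = ⇑(T ^ k) ∘ ⇑T := rfl
        rw [hco]
        exact ih.comp hT
  -- integrability
  have hX₀' : Measurable X₀ := hX₀
  have hX0mem : MemLp X₀ ⊤ μ := ⟨hX₀'.aestronglyMeasurable, hbdd⟩
  have hX0int : Integrable X₀ μ := hX0mem.integrable le_top
  have hXint : ∀ k : ℕ, Integrable (X (k : ℤ)) μ := by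
    intro k
    rw [hX]
    have hz : (T : Equiv.Perm Ω) ^ (k : ℤ) = T ^ k := zpow_natCast T k
    rw [hz]
    exact ((hTpow k).integrable_comp hX₀'.aestronglyMeasurable).2 hX0int
  set a : ℕ → ℝ≥0∞ := fun j => eLpNorm (μ[X ((j : ℤ) + 1) | 𝓕 0]) ⊤ μ with ha
  have hb : ∀ n : ℕ, eLpNorm (μ[S (n + 1) | 𝓕 0]) ⊤ μ ≤ ∑ j ∈ Finset.range (n+1), a j := by
    intro n
    have hsum : S (n + 1) = ∑ k ∈ Finset.Icc 1 (n + 1), X (k : ℤ) := by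
      rw [hS]; funext ω; rw [Finset.sum_apply]
    have hce : μ[S (n + 1) | 𝓕 0] =ᵐ[μ] ∑ k ∈ Finset.Icc 1 (n + 1), μ[X (k : ℤ) | 𝓕 0] := by
      rw [hsum]; exact condExp_finset_sum (fun k _ => hXint k) (𝓕 0)
    calc eLpNorm (μ[S (n + 1) | 𝓕 0]) ⊤ μ
        = eLpNorm (∑ k ∈ Finset.Icc 1 (n + 1), μ[X (k : ℤ) | 𝓕 0]) ⊤ μ :=
          eLpNorm_congr_ae hce
      _ ≤ ∑ k ∈ Finset.Icc 1 (n + 1), eLpNorm (μ[X (k : ℤ) | 𝓕 0]) ⊤ μ :=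
          eLpNorm_sum_le
            (fun k _ => (stronglyMeasurable_condExp.mono hle).aestronglyMeasurable) le_top
      _ = ∑ j ∈ Finset.range (n+1), a j := by
          rw [← Finset.Ico_add_one_right_eq_Icc, Finset.sum_Ico_eq_sum_range]
          refine Finset.sum_congr (by congr 1 <;> omega) (fun j _ => ?_)
          have hcast : ((1 + j : ℕ) : ℤ) = (j : ℤ) + 1 := by push_cast; ring
          rw [ha, hcast]
  calc ∑' n : ℕ, eLpNorm (μ[S (n + 1) | 𝓕 0]) ⊤ μ / ((n : ℝ≥0∞) + 1) ^ ((3 : ℝ) / 2)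
      ≤ ∑' n : ℕ, (∑ j ∈ Finset.range (n+1), a j) / ((n : ℝ≥0∞) + 1) ^ ((3 : ℝ) / 2) :=
        ENNReal.tsum_le_tsum (fun n => ENNReal.div_le_div_right (hb n) _)
    _ ≤ 3 * ∑' j : ℕ, a j / ((j : ℝ≥0∞) + 1) ^ ((1 : ℝ) / 2) := stmt6_key a
end

section
/- Given the even moment bounds E(M^{2p}) ≤ 2 (2p−1)!! (2nB²)^p for all integers p ≥ 1 for a nonnegative random variable M, it follows that P(M ≥ x) ≤ 2√e · exp(−x²/(4nB²)) for all x > 0. -/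
/-!
Markov's inequality for `M ^ (2p)` gives `P(M ≥ x) ≤ 2 (2p-1)!! / s ^ p` with `s = x² / (2nB²)`,
and for the `p` with `s ∈ [2p-1, 2p+1]` this is at most `2 exp ((1 - s) / 2)`. Indeed
`(2p-1)!! e^p ≤ (2p+1)^p` by induction, the step being `(1 + 2/(2p+1))^(p+1) ≥ e`; applied at `p`
and `p - 1` this settles the endpoints `s = 2p ± 1`, and `s ↦ p log s - s / 2` is concave in between.
-/

open MeasureTheory Real Finset

theorem inv_succ_le_log_odd_div (p : ℕ) :
    ((p : ℝ) + 1)⁻¹ ≤ log ((2 * p + 3) / (2 * p + 1)) := by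
  -- the first term of `log ((1 + y) / (1 - y)) = 2 ∑ y ^ (2k+1) / (2k+1)` at `y = 1 / (2p+2)`
  have hsum := hasSum_log_one_add_inv (a := (p : ℝ) + 1 / 2) (by positivity)
  have h0 := le_hasSum hsum 0 (fun k _ => by positivity)
  have e1 : (2 * p + 3) / (2 * p + 1) = 1 + ((p : ℝ) + 1 / 2)⁻¹ := by field_simp; ring
  have e2 : (2 * ((p : ℝ) + 1 / 2) + 1) = 2 * (p + 1) := by ring
  rw [e1]
  simp only [e2, CharP.cast_eq_zero, mul_zero, zero_add, div_one, mul_one, pow_one] at h0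
  rwa [mul_one_div, div_mul_cancel_left₀ two_ne_zero] at h0

theorem exp_one_mul_odd_pow_le (p : ℕ) :
    exp 1 * (2 * (p : ℝ) + 1) ^ (p + 1) ≤ (2 * p + 3) ^ (p + 1) := by
  have hpos : (0 : ℝ) < 2 * p + 1 := by positivity
  have hlog : 1 ≤ ((p + 1 : ℕ) : ℝ) * log ((2 * p + 3) / (2 * p + 1)) := by
    have := inv_succ_le_log_odd_div p
    rw [inv_le_iff_one_le_mul₀' (by positivity)] at this
    exact_mod_cast this
  calc exp 1 * (2 * (p : ℝ) + 1) ^ (p + 1)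
      ≤ ((2 * p + 3) / (2 * p + 1)) ^ (p + 1) * (2 * p + 1) ^ (p + 1) := by
        gcongr
        rw [← exp_log (by positivity : (0 : ℝ) < (2 * p + 3) / (2 * p + 1)), ← exp_nat_mul]
        exact exp_le_exp.2 hlog
    _ = (2 * p + 3) ^ (p + 1) := by rw [← mul_pow, div_mul_cancel₀ _ hpos.ne']

theorem prod_odd_mul_exp_le (p : ℕ) :
    (∏ k ∈ range p, (2 * (k : ℝ) + 1)) * exp p ≤ (2 * p + 1) ^ p := by
  induction p with
  | zero => simp
  | succ q ih =>
    calc (∏ k ∈ range (q + 1), (2 * (k : ℝ) + 1)) * exp ↑(q + 1)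
        = ((∏ k ∈ range q, (2 * (k : ℝ) + 1)) * exp q) * ((2 * q + 1) * exp 1) := by
          rw [prod_range_succ, Nat.cast_succ, exp_add]; ring
      _ ≤ (2 * q + 1) ^ q * ((2 * q + 1) * exp 1) := by gcongr
      _ = exp 1 * (2 * (q : ℝ) + 1) ^ (q + 1) := by ring
      _ ≤ (2 * q + 3) ^ (q + 1) := exp_one_mul_odd_pow_le q
      _ = (2 * ↑(q + 1) + 1) ^ (q + 1) := by push_cast; ring

theorem concaveOn_mul_log_sub_half (p : ℝ) (hp : 0 ≤ p) :
    ConcaveOn ℝ (Set.Ioi 0) fun s => p * log s - s / 2 :=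
  (strictConcaveOn_log_Ioi.concaveOn.smul hp).sub
    ((convexOn_id (convex_Ioi 0)).smul (by norm_num : (0 : ℝ) ≤ 1 / 2) |>.congr
      fun s _ => by simp [div_eq_inv_mul])

theorem prod_odd_mul_exp_le_pow (m : ℕ) {s : ℝ} (hs : s ∈ Set.Icc (2 * (m : ℝ) + 1) (2 * m + 3)) :
    (∏ k ∈ range (m + 1), (2 * (k : ℝ) + 1)) * exp ((s - 1) / 2) ≤ s ^ (m + 1) := by
  set D := ∏ k ∈ range (m + 1), (2 * (k : ℝ) + 1)
  have hD : 0 < D := prod_pos fun k _ => by positivity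
  have hlog_iff : ∀ t : ℝ, 0 < t →
      (D * exp ((t - 1) / 2) ≤ t ^ (m + 1) ↔ log D - 1 / 2 ≤ (m + 1 : ℕ) * log t - t / 2) := by
    intro t ht
    rw [← log_le_log_iff (by positivity) (by positivity), log_mul hD.ne' (exp_pos _).ne',
      log_exp, log_pow]
    constructor <;> intro h <;> linarith
  have hlow : D * exp ((2 * m + 1 - 1) / 2) ≤ (2 * m + 1) ^ (m + 1) :=
    calc D * exp ((2 * m + 1 - 1) / 2)
        = ((∏ k ∈ range m, (2 * (k : ℝ) + 1)) * exp m) * (2 * m + 1) := by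
          rw [show D = _ from prod_range_succ _ m]; ring_nf
      _ ≤ (2 * m + 1) ^ m * (2 * m + 1) := by gcongr; exact prod_odd_mul_exp_le m
      _ = (2 * m + 1) ^ (m + 1) := by ring
  have hhigh : D * exp ((2 * m + 3 - 1) / 2) ≤ (2 * m + 3) ^ (m + 1) :=
    calc D * exp ((2 * m + 3 - 1) / 2) = D * exp ↑(m + 1) := by push_cast; ring_nf
      _ ≤ (2 * ↑(m + 1) + 1) ^ (m + 1) := prod_odd_mul_exp_le (m + 1)
      _ = (2 * m + 3) ^ (m + 1) := by push_cast; ring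
  have hlow_pos : (0 : ℝ) < 2 * m + 1 := by positivity
  have hhigh_pos : (0 : ℝ) < 2 * m + 3 := by positivity
  rw [hlog_iff s (hlow_pos.trans_le hs.1)]
  calc log D - 1 / 2
      ≤ min (((m + 1 : ℕ) : ℝ) * log (2 * m + 1) - (2 * m + 1) / 2)
          (((m + 1 : ℕ) : ℝ) * log (2 * m + 3) - (2 * m + 3) / 2) :=
        le_min ((hlog_iff _ hlow_pos).1 hlow) ((hlog_iff _ hhigh_pos).1 hhigh)
    _ ≤ _ := (concaveOn_mul_log_sub_half _ (Nat.cast_nonneg _)).min_le_of_mem_Icc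
        hlow_pos hhigh_pos hs

theorem measureReal_le_integral_pow_div {Ω : Type*} [MeasurableSpace Ω] {μ : Measure Ω}
    [IsFiniteMeasure μ] {M : Ω → ℝ} {k : ℕ} (hk : Even k)
    (hint : Integrable (fun ω => M ω ^ k) μ) {x : ℝ} (hx : 0 < x) :
    μ.real {ω | x ≤ M ω} ≤ (∫ ω, M ω ^ k ∂μ) / x ^ k := by
  rw [le_div_iff₀' (by positivity)]
  calc x ^ k * μ.real {ω | x ≤ M ω} ≤ x ^ k * μ.real {ω | x ^ k ≤ M ω ^ k} := by
        refine mul_le_mul_of_nonneg_left (measureReal_mono ?_) (by positivity)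
        exact fun ω (hω : x ≤ M ω) => pow_le_pow_left₀ hx.le hω k
    _ ≤ ∫ ω, M ω ^ k ∂μ :=
        mul_meas_ge_le_integral_of_nonneg (ae_of_all _ fun ω => hk.pow_nonneg _) hint _

theorem measure_ge_le_two_mul_exp_of_moment_le {Ω : Type*} [MeasurableSpace Ω]
    {μ : Measure Ω} [IsProbabilityMeasure μ] {M : Ω → ℝ} {σ2 : ℝ}
    (hint : ∀ p : ℕ, 1 ≤ p → Integrable (fun ω => M ω ^ (2 * p)) μ)
    (hmom : ∀ p : ℕ, 1 ≤ p →
      ∫ ω, M ω ^ (2 * p) ∂μ ≤ 2 * (∏ k ∈ range p, (2 * (k : ℝ) + 1)) * σ2 ^ p)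
    {x : ℝ} (hx : 0 < x) :
    μ {ω | x ≤ M ω} ≤ ENNReal.ofReal (2 * exp ((1 - x ^ 2 / σ2) / 2)) := by
  set s := x ^ 2 / σ2
  by_cases hs : s ≤ 1
  · calc μ {ω | x ≤ M ω} ≤ 1 := prob_le_one
      _ ≤ ENNReal.ofReal (2 * exp ((1 - s) / 2)) := by
        rw [← ENNReal.ofReal_one]
        gcongr
        linarith [one_le_exp (by linarith : 0 ≤ (1 - s) / 2)]
  rw [not_le] at hs
  have hσ2 : 0 < σ2 := (div_pos_iff_of_pos_left (by positivity)).1 (zero_lt_one.trans hs)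
  -- the moment of order `2 (m + 1)` with `s ∈ [2m+1, 2m+3]` nearly optimizes Markov's bound
  set m := ⌊(s - 1) / 2⌋₊
  have hm : s ∈ Set.Icc (2 * (m : ℝ) + 1) (2 * m + 3) := by
    have h1 := Nat.floor_le (by linarith : 0 ≤ (s - 1) / 2)
    have h2 := Nat.lt_floor_add_one ((s - 1) / 2)
    constructor <;> linarith
  have hxpow : x ^ (2 * (m + 1)) = s ^ (m + 1) * σ2 ^ (m + 1) := by
    rw [pow_mul, ← mul_pow, div_mul_cancel₀ _ hσ2.ne']
  rw [← ofReal_measureReal]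
  gcongr
  calc μ.real {ω | x ≤ M ω}
      ≤ (∫ ω, M ω ^ (2 * (m + 1)) ∂μ) / x ^ (2 * (m + 1)) :=
        measureReal_le_integral_pow_div (even_two_mul _) (hint _ le_add_self) hx
    _ ≤ 2 * (∏ k ∈ range (m + 1), (2 * (k : ℝ) + 1)) * σ2 ^ (m + 1) / x ^ (2 * (m + 1)) := by
        gcongr; exact hmom _ le_add_self
    _ ≤ 2 * exp ((1 - s) / 2) := by
        have hD : ∏ k ∈ range (m + 1), (2 * (k : ℝ) + 1) ≤ exp ((1 - s) / 2) * s ^ (m + 1) := by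
          rw [← div_le_iff₀' (exp_pos _), div_eq_mul_inv, ← exp_neg]
          rw [show -((1 - s) / 2) = (s - 1) / 2 by ring]
          exact prod_odd_mul_exp_le_pow m hm
        rw [hxpow, div_le_iff₀ (by positivity)]
        calc 2 * (∏ k ∈ range (m + 1), (2 * (k : ℝ) + 1)) * σ2 ^ (m + 1)
            ≤ 2 * (exp ((1 - s) / 2) * s ^ (m + 1)) * σ2 ^ (m + 1) := by gcongr
          _ = 2 * exp ((1 - s) / 2) * (s ^ (m + 1) * σ2 ^ (m + 1)) := by ring

theorem stmt_18_general {Ω : Type*} [MeasurableSpace Ω]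
    (μ : Measure Ω) [IsProbabilityMeasure μ]
    (M : Ω → ℝ)
    (B : ℝ) (n : ℕ)
    (hint : ∀ p : ℕ, 1 ≤ p → Integrable (fun ω => M ω ^ (2 * p)) μ)
    (hmom : ∀ p : ℕ, 1 ≤ p →
      ∫ ω, M ω ^ (2 * p) ∂μ
        ≤ 2 * (∏ k ∈ Finset.range p, (2 * (k : ℝ) + 1)) * (2 * n * B ^ 2) ^ p) :
    ∀ x : ℝ, 0 < x →
      μ {ω | x ≤ M ω}
        ≤ ENNReal.ofReal (2 * Real.sqrt (Real.exp 1) *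
            Real.exp (-(x ^ 2) / (4 * n * B ^ 2))) := by
  intro x hx
  convert measure_ge_le_two_mul_exp_of_moment_le hint hmom hx using 2
  rw [← exp_half, mul_assoc, ← exp_add]
  ring_nf

/-- If a nonnegative random variable `M` satisfies `E(M^(2p)) ≤ 2 (2p-1)!! (2nB²)^p`
for all integers `p ≥ 1`, then `P(M ≥ x) ≤ 2√e exp(-x²/(4nB²))` for all `x > 0`. -/
theorem stmt_18 {Ω : Type*} [MeasurableSpace Ω]
    (μ : Measure Ω) [IsProbabilityMeasure μ]
    (M : Ω → ℝ) (hM : Measurable M) (hMnonneg : ∀ ω, 0 ≤ M ω)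
    (B : ℝ) (hB : 0 < B) (n : ℕ) (hn : 1 ≤ n)
    (hint : ∀ p : ℕ, 1 ≤ p → Integrable (fun ω => M ω ^ (2 * p)) μ)
    (hmom : ∀ p : ℕ, 1 ≤ p →
      ∫ ω, M ω ^ (2 * p) ∂μ
        ≤ 2 * (∏ k ∈ Finset.range p, (2 * (k : ℝ) + 1)) * (2 * n * B ^ 2) ^ p) :
    ∀ x : ℝ, 0 < x →
      μ {ω | x ≤ M ω}
        ≤ ENNReal.ofReal (2 * Real.sqrt (Real.exp 1) *
            Real.exp (-(x ^ 2) / (4 * n * B ^ 2))) :=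
  stmt_18_general μ M B n hint hmom
end
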